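/- Property B is an invariant of conjugacy of flows: if {F_t} on (X,𝔅,μ) has Property B, and {F'_t} on (X',𝔅',μ') is conjugate to {F_t} (i.e., there is an isomorphism T : X' → X with μ' equivalent to μ∘T^{-1} and F_t(T x) = T(F'_t(x)) for all t and a.e. x), then {F'_t} has Property B. -/

import Mathlib

open MeasureTheory Filter Set
open scoped ENNReal

/-- The return set `Λ_{F,δ,s}(A)` of a flow `F`. -/
def lamSet {X : Type*} (F : ℝ → X → X) (A : Set X) (δ s : ℝ) : Set X :=
  {x | x ∈ A ∧ ∃ t : ℝ, Real.exp (s - δ) < |t| ∧ |t| < Real.exp (s + δ) ∧ F t x ∈ A}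

/-- Property B of a flow `F` on a measure space `(X, μ)`. -/
def PropertyB {X : Type*} [MeasurableSpace X] (μ : Measure X) (F : ℝ → X → X) : Prop :=
  ∃ A : Set X, MeasurableSet A ∧ 0 < μ A ∧
    ∀ δ : ℝ, 0 < δ → limsup (fun s : ℝ => μ (lamSet F A δ s)) atTop = 0

open scoped Topology

/-!
Put `ν = T_* μ'`, equivalent to `μ`, and shrink the Property-B set of `F` to `B` with
`0 < ν B < ∞`. The conjugacy holds only almost everywhere for each fixed time, so it cannot be
used pointwise along orbits; by Fubini it does hold at almost every time along almost every
orbit. We therefore take for `F'` the set `A'` of points of `T⁻¹ B` whose orbit is tracked in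
this sense and which spend a positive amount of time in `T⁻¹ B` during `[-1, 1]` (a non-null
set, by nonsingularity and Fubini again). A return of `x ∈ A'` to `A'` at time `t` then forces a
return of `T x` to `B` at some time in `[t - 1, t + 1]`, so for large `s` the return set
`Λ_{F',δ,s}(A')` lies in `T⁻¹ Λ_{F,2δ,s}(B)`. Its measure is controlled by `ν` restricted to
`B`, a finite measure absolutely continuous with respect to `μ`, hence tends to zero.
-/

lemma ENNReal.limsup_eq_zero_iff_tendsto {ι : Type*} {l : Filter ι} [l.NeBot] {u : ι → ℝ≥0∞} :
    limsup u l = 0 ↔ Tendsto u l (𝓝 0) :=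
  ⟨fun h => tendsto_of_le_liminf_of_limsup_le zero_le h.le, Tendsto.limsup_eq⟩

lemma MeasureTheory.Measure.AbsolutelyContinuous.tendsto_measure_nhds_zero {α ι : Type*}
    [MeasurableSpace α] {μ ν : Measure α} [SigmaFinite μ] [IsFiniteMeasure ν] (h : ν ≪ μ)
    {l : Filter ι} {s : ι → Set α} (hs : Tendsto (fun i => μ (s i)) l (𝓝 0)) :
    Tendsto (fun i => ν (s i)) l (𝓝 0) := by
  simp_rw [← Measure.setLIntegral_rnDeriv h]
  exact tendsto_setLIntegral_zero (by simp [Measure.lintegral_rnDeriv h]) hs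

lemma MeasureTheory.measurableSet_setOf_ae {α β : Type*} [MeasurableSpace α] [MeasurableSpace β]
    {ν : Measure β} [SFinite ν] {p : α → β → Prop} (hp : MeasurableSet {q : α × β | p q.1 q.2}) :
    MeasurableSet {x | ∀ᵐ y ∂ν, p x y} :=
  measurable_measure_prodMk_left hp.compl (measurableSet_singleton 0)

lemma lamSet_mono {X : Type*} (F : ℝ → X → X) {A B : Set X} (h : A ⊆ B) (δ s : ℝ) :
    lamSet F A δ s ⊆ lamSet F B δ s :=
  fun _ ⟨hx, t, ht₁, ht₂, htA⟩ => ⟨h hx, t, ht₁, ht₂, h htA⟩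

lemma eventually_abs_add_mem_exp_window {δ : ℝ} (hδ : 0 < δ) :
    ∀ᶠ s in atTop, ∀ t ρ : ℝ, Real.exp (s - δ) < |t| → |t| < Real.exp (s + δ) → |ρ| ≤ 1 →
      Real.exp (s - 2 * δ) < |t + ρ| ∧ |t + ρ| < Real.exp (s + 2 * δ) := by
  have hgap : Tendsto (fun s => Real.exp (s - 2 * δ) * (Real.exp δ - 1)) atTop atTop :=
    (Real.tendsto_exp_atTop.comp (tendsto_atTop_add_const_right _ _ tendsto_id)).atTop_mul_const
      (by linarith [Real.add_one_lt_exp hδ.ne'])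
  filter_upwards [hgap.eventually_ge_atTop 1] with s hs t ρ ht₁ ht₂ hρ
  have hlow : Real.exp (s - δ) = Real.exp (s - 2 * δ) * Real.exp δ := by
    rw [← Real.exp_add]; ring_nf
  have hhigh : Real.exp (s + 2 * δ) = Real.exp (s + δ) * Real.exp δ := by
    rw [← Real.exp_add]; ring_nf
  have hmono : Real.exp (s - 2 * δ) ≤ Real.exp (s + δ) := Real.exp_le_exp.2 (by linarith)
  have hδ1 : 1 ≤ Real.exp δ := Real.one_le_exp hδ.le
  constructor
  · nlinarith [abs_sub_abs_le_abs_add t ρ]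
  · nlinarith [abs_add_le t ρ]

section Flow

variable {X : Type*} [MeasurableSpace X] {μ : Measure X} {F : ℝ → X → X} {P : Set X}

structure IsNonsingularFlow (μ : Measure X) (F : ℝ → X → X) : Prop where
  measurable : Measurable fun p : ℝ × X => F p.1 p.2
  zero : ∀ x, F 0 x = x
  add : ∀ s t : ℝ, ∀ x, F (s + t) x = F s (F t x)
  quasiMeasurePreserving : ∀ t : ℝ, Measure.QuasiMeasurePreserving (F t) μ μ

noncomputable def sojourn (F : ℝ → X → X) (P : Set X) (x : X) : ℝ≥0∞ :=
  volume {ρ ∈ Icc (-1 : ℝ) 1 | F ρ x ∈ P}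

lemma measurableSet_flow_mem (hF : Measurable fun p : ℝ × X => F p.1 p.2)
    (hP : MeasurableSet P) : MeasurableSet {q : X × ℝ | F q.2 q.1 ∈ P} :=
  (hF.comp measurable_swap) hP

lemma measurable_sojourn (hF : Measurable fun p : ℝ × X => F p.1 p.2) (hP : MeasurableSet P) :
    Measurable (sojourn F P) :=
  measurable_measure_prodMk_left
    ((measurable_snd measurableSet_Icc).inter (measurableSet_flow_mem hF hP))

variable [SFinite μ]

lemma IsNonsingularFlow.measure_eq_zero_of_ae_ae_notMem (hF : IsNonsingularFlow μ F)
    (hP : MeasurableSet P) {I : Set ℝ} (hI : volume I ≠ 0)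
    (h : ∀ᵐ x ∂μ, ∀ᵐ ρ ∂volume.restrict I, F ρ x ∉ P) : μ P = 0 := by
  rw [Measure.ae_ae_comm (p := fun x ρ => F ρ x ∉ P)
    (measurableSet_flow_mem hF.measurable hP).compl] at h
  obtain ⟨ρ, -, hρ⟩ := Measure.exists_mem_of_measure_ne_zero_of_ae hI h
  refine measure_eq_zero_iff_ae_notMem.2 ?_
  filter_upwards [(hF.quasiMeasurePreserving (-ρ)).ae hρ] with x hx
  rwa [← hF.add, add_neg_cancel, hF.zero] at hx

lemma IsNonsingularFlow.measure_sojourn_pos_ne_zero (hF : IsNonsingularFlow μ F)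
    (hP : MeasurableSet P) (hP0 : μ P ≠ 0) : μ {x ∈ P | 0 < sojourn F P x} ≠ 0 := by
  set Y := {x ∈ P | 0 < sojourn F P x}
  have hY : MeasurableSet Y := hP.inter (measurable_sojourn hF.measurable hP measurableSet_Ioi)
  intro hY0
  refine hP0 (hF.measure_eq_zero_of_ae_ae_notMem hP (I := Icc 0 1) (by simp) ?_)
  have hvisit : ∀ᵐ x ∂μ, ∀ᵐ ρ, F ρ x ∉ Y :=
    (Measure.ae_ae_comm (p := fun x ρ => F ρ x ∉ Y)
      (measurableSet_flow_mem hF.measurable hY).compl).2 <| Eventually.of_forall fun ρ =>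
        measure_eq_zero_iff_ae_notMem.1 ((hF.quasiMeasurePreserving ρ).preimage_null hY0)
  filter_upwards [hvisit] with x hx
  set S := {ρ ∈ Icc (0 : ℝ) 1 | F ρ x ∈ P}
  have hS0 : volume S = 0 := by
    by_contra hS
    obtain ⟨ρ, hρS, hρY⟩ := Measure.exists_mem_of_measure_ne_zero_of_ae hS (ae_restrict_of_ae hx)
    refine hρY ⟨hρS.2, ?_⟩
    -- the orbit of `F ρ x` revisits `P` at the times `S - ρ ⊆ [-1, 1]`
    calc 0 < volume S := pos_of_ne_zero hS
      _ = volume ((· + ρ) ⁻¹' S) := (measure_preimage_add_right _ _ _).symm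
      _ ≤ sojourn F P (F ρ x) := measure_mono fun σ ⟨⟨h₀, h₁⟩, hσ⟩ => by
          refine ⟨⟨by linarith [hρS.1.2], by linarith [hρS.1.1]⟩, ?_⟩
          rwa [← hF.add]
  rw [ae_restrict_iff' measurableSet_Icc]
  filter_upwards [measure_eq_zero_iff_ae_notMem.1 hS0] with ρ hρ hρI hρP
  exact hρ ⟨hρI, hρP⟩

end Flow

lemma eventually_lamSet_subset_preimage {X X' : Type*} {F : ℝ → X → X} {F' : ℝ → X' → X'}
    {T : X' → X} {A' : Set X'} {B : Set X} (hA' : A' ⊆ T ⁻¹' B)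
    (hret : ∀ x ∈ A', ∀ t, F' t x ∈ A' → ∃ ρ, |ρ| ≤ 1 ∧ F (t + ρ) (T x) ∈ B) {δ : ℝ}
    (hδ : 0 < δ) : ∀ᶠ s in atTop, lamSet F' A' δ s ⊆ T ⁻¹' lamSet F B (2 * δ) s := by
  filter_upwards [eventually_abs_add_mem_exp_window hδ] with s hs x ⟨hx, t, ht₁, ht₂, htx⟩
  obtain ⟨ρ, hρ, hρB⟩ := hret x hx t htx
  obtain ⟨h₁, h₂⟩ := hs t ρ ht₁ ht₂ hρ
  exact ⟨hA' hx, t + ρ, h₁, h₂, hρB⟩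

lemma IsNonsingularFlow.exists_returning_subset {X X' : Type*} [MeasurableSpace X]
    [MeasurableSpace X'] {μ' : Measure X'} [SFinite μ'] {F : ℝ → X → X} {F' : ℝ → X' → X'}
    {T : X' → X} {B : Set X} (hF' : IsNonsingularFlow μ' F')
    (hF : Measurable fun p : ℝ × X => F p.1 p.2) (hT : Measurable T)
    (hconj : ∀ t : ℝ, ∀ᵐ x ∂μ', T (F' t x) = F t (T x)) (hB : MeasurableSet B)
    (hB0 : μ' (T ⁻¹' B) ≠ 0) :
    ∃ A' ⊆ T ⁻¹' B, MeasurableSet A' ∧ 0 < μ' A' ∧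
      ∀ x ∈ A', ∀ t, F' t x ∈ A' → ∃ ρ, |ρ| ≤ 1 ∧ F (t + ρ) (T x) ∈ B := by
  set P := T ⁻¹' B
  have hP : MeasurableSet P := hT hB
  have htrack : MeasurableSet {q : X' × ℝ | F' q.2 q.1 ∈ P → F q.2 (T q.1) ∈ B} :=
    (measurableSet_flow_mem hF'.measurable hP).himp
      ((hF.comp (measurable_snd.prodMk (hT.comp measurable_fst))) hB)
  set Ω := {x | ∀ᵐ v, F' v x ∈ P → F v (T x) ∈ B}
  have hΩ : μ' Ωᶜ = 0 :=
    ae_iff.1 <| (Measure.ae_ae_comm htrack).2 <| Eventually.of_forall fun v =>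
      (hconj v).mono fun x hx hv => hx ▸ hv
  refine ⟨{x ∈ P | 0 < sojourn F' P x} ∩ Ω, fun x hx => hx.1.1,
    (hP.inter (measurable_sojourn hF'.measurable hP measurableSet_Ioi)).inter
      (measurableSet_setOf_ae htrack), ?_, ?_⟩
  · rw [measure_inter_conull hΩ]
    exact pos_of_ne_zero (hF'.measure_sojourn_pos_ne_zero hP hB0)
  · rintro x ⟨-, hx⟩ t ⟨⟨-, hsoj⟩, -⟩
    have hx' : ∀ᵐ ρ, F' ρ (F' t x) ∈ P → F (t + ρ) (T x) ∈ B := by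
      filter_upwards [(measurePreserving_add_left volume t).quasiMeasurePreserving.ae hx]
        with ρ hρ
      rwa [← hF'.add, add_comm ρ t]
    obtain ⟨ρ, ⟨hρI, hρP⟩, hρ⟩ :=
      Measure.exists_mem_of_measure_ne_zero_of_ae hsoj.ne' (ae_restrict_of_ae hx')
    exact ⟨ρ, abs_le.2 hρI, hρ hρP⟩

theorem stmt_2_general {X X' : Type*} [MeasurableSpace X] [MeasurableSpace X']
    (μ : Measure X) (μ' : Measure X') [SigmaFinite μ] [SigmaFinite μ']
    (T : X' ≃ᵐ X) (hμ1 : μ'.map T ≪ μ) (hμ2 : μ ≪ μ'.map T)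
    (F : ℝ → X → X) (F' : ℝ → X' → X')
    (hFmeas : Measurable (fun p : ℝ × X => F p.1 p.2))
    (hF'meas : Measurable (fun p : ℝ × X' => F' p.1 p.2))
    (hF'0 : ∀ x, F' 0 x = x)
    (hF'add : ∀ s t : ℝ, ∀ x, F' (s + t) x = F' s (F' t x))
    (hF'ns : ∀ t : ℝ, Measure.QuasiMeasurePreserving (F' t) μ' μ')
    (hconj : ∀ t : ℝ, ∀ᵐ x ∂μ', T (F' t x) = F t (T x))
    (hB : PropertyB μ F) : PropertyB μ' F' := by
  obtain ⟨A, hA, hA0, hAlim⟩ := hB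
  set ν := μ'.map T
  have : SigmaFinite ν := T.sigmaFinite_map
  obtain ⟨B, hB, hBA, hB0, hBfin⟩ :=
    Measure.exists_subset_measure_lt_top (μ := ν) hA (pos_of_ne_zero fun h => hA0.ne' (hμ2 h))
  obtain ⟨A', hA'B, hA', hA'0, hret⟩ :=
    IsNonsingularFlow.exists_returning_subset ⟨hF'meas, hF'0, hF'add, hF'ns⟩ hFmeas T.measurable
      hconj hB (by rw [← T.map_apply]; exact hB0.ne')
  refine ⟨A', hA', hA'0, fun δ hδ => ENNReal.limsup_eq_zero_iff_tendsto.2 ?_⟩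
  have : IsFiniteMeasure (ν.restrict B) := isFiniteMeasure_restrict.2 hBfin.ne
  have hνB : ν.restrict B ≪ μ :=
    (Measure.absolutelyContinuous_of_le Measure.restrict_le_self).trans hμ1
  have hlim : Tendsto (fun s => ν.restrict B (lamSet F B (2 * δ) s)) atTop (𝓝 0) :=
    hνB.tendsto_measure_nhds_zero <| tendsto_of_tendsto_of_tendsto_of_le_of_le tendsto_const_nhds
      (ENNReal.limsup_eq_zero_iff_tendsto.1 (hAlim _ (by positivity))) (fun _ => zero_le)
      fun s => measure_mono (lamSet_mono F hBA _ _)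
  refine tendsto_of_tendsto_of_tendsto_of_le_of_le' tendsto_const_nhds hlim
    (Eventually.of_forall fun _ => zero_le) ?_
  filter_upwards [eventually_lamSet_subset_preimage hA'B hret hδ] with s hs
  calc μ' (lamSet F' A' δ s) ≤ μ' (T ⁻¹' lamSet F B (2 * δ) s) := measure_mono hs
    _ = ν.restrict B (lamSet F B (2 * δ) s) := by
      rw [Measure.restrict_eq_self _ fun x hx => hx.1, T.map_apply]

theorem stmt_2 {X X' : Type*} [MeasurableSpace X] [MeasurableSpace X']
    (μ : Measure X) (μ' : Measure X') [SigmaFinite μ] [SigmaFinite μ']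
    (T : X' ≃ᵐ X) (hμ1 : μ'.map T ≪ μ) (hμ2 : μ ≪ μ'.map T)
    (F : ℝ → X → X) (F' : ℝ → X' → X')
    (hFmeas : Measurable (fun p : ℝ × X => F p.1 p.2))
    (hF0 : ∀ x, F 0 x = x)
    (hFadd : ∀ s t : ℝ, ∀ x, F (s + t) x = F s (F t x))
    (hFns : ∀ t : ℝ, Measure.QuasiMeasurePreserving (F t) μ μ)
    (hF'meas : Measurable (fun p : ℝ × X' => F' p.1 p.2))
    (hF'0 : ∀ x, F' 0 x = x)
    (hF'add : ∀ s t : ℝ, ∀ x, F' (s + t) x = F' s (F' t x))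
    (hF'ns : ∀ t : ℝ, Measure.QuasiMeasurePreserving (F' t) μ' μ')
    (hconj : ∀ t : ℝ, ∀ᵐ x ∂μ', T (F' t x) = F t (T x))
    (hB : PropertyB μ F) : PropertyB μ' F' :=
  stmt_2_general μ μ' T hμ1 hμ2 F F' hFmeas hF'meas hF'0 hF'add hF'ns hconj hB
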